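/- Let F : S → G be a monotone map between complete lattices with Alexandrov upper-set topologies such that U ↦ F(U) is an order isomorphism from the lattice of upward closed subsets of S onto that of G. Then F preserves infima of open sets: for every upward closed U ⊆ S, F(⋀U) = ⋀F(U). -/

import Mathlib

/-- If `F` is a monotone map of complete lattices such that `U ↦ F '' U` is an order
isomorphism from the lattice of upward closed subsets of `S` onto that of `G`, then `F`
preserves infima of open (upward closed) sets: `F (⋀ U) = ⋀ (F '' U)`. -/
theorem stmt8 {S G : Type*} [CompleteLattice S] [CompleteLattice G] (F : S → G)
    (hmono : Monotone F)
    (hopen : ∀ U : Set S, IsUpperSet U → IsUpperSet (F '' U))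
    (hsurj : ∀ V : Set G, IsUpperSet V → ∃ U : Set S, IsUpperSet U ∧ F '' U = V)
    (hinj : ∀ U W : Set S, IsUpperSet U → IsUpperSet W → F '' U = F '' W → U = W) :
    ∀ U : Set S, IsUpperSet U → F (sInf U) = sInf (F '' U) := by
  -- the inverse of the image map is monotone
  have hinv : ∀ U W : Set S, IsUpperSet U → IsUpperSet W → F '' U ⊆ F '' W → U ⊆ W := by
    intro U W hU hW h
    have h1 : F '' (U ∪ W) = F '' W := by
      rw [Set.image_union]
      exact Set.union_eq_self_of_subset_left h
    have h2 := hinj (U ∪ W) W (hU.union hW) hW h1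
    exact h2 ▸ Set.subset_union_left
  -- choose preimages for all principal upper sets in G
  choose Ug hUg hFUg using fun g : G => hsurj (Set.Ici g) (isUpperSet_Ici _)
  -- the image of a principal upper set is principal
  have hIci : ∀ x : S, F '' Set.Ici x = Set.Ici (F x) := by
    intro x
    set V := F '' Set.Ici x with hV
    have hVu : IsUpperSet V := hopen _ (isUpperSet_Ici _)
    set T : Set S := ⋃ g ∈ V, Ug g with hT
    have hTu : IsUpperSet T := isUpperSet_iUnion₂ (fun g _ => hUg g)
    have hTimg : F '' T = V := by
      rw [hT, Set.image_iUnion₂]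
      ext v
      simp only [Set.mem_iUnion]
      constructor
      · rintro ⟨g, hg, hv⟩
        rw [hFUg g] at hv
        exact hVu hv hg
      · intro hv
        exact ⟨v, hv, by rw [hFUg v]; exact Set.self_mem_Ici⟩
    have hTeq : T = Set.Ici x := hinj T (Set.Ici x) hTu (isUpperSet_Ici _) (by rw [hTimg])
    have hxT : x ∈ T := hTeq ▸ Set.self_mem_Ici
    rw [hT] at hxT
    simp only [Set.mem_iUnion] at hxT
    obtain ⟨g, hgV, hxg⟩ := hxT
    have hsub : Set.Ici x ⊆ Ug g := fun y hy => (hUg g) hy hxg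
    have hVIg : V ⊆ Set.Ici g := by
      rw [hV, ← hFUg g]
      exact Set.image_mono hsub
    obtain ⟨z, hz, hzg⟩ := hgV
    have hFxg : F x ≤ g := hzg ▸ hmono hz
    apply Set.Subset.antisymm
    · intro v hv
      exact le_trans hFxg (hVIg hv)
    · intro v hv
      exact hVu hv ⟨x, Set.self_mem_Ici, rfl⟩
  intro U hU
  apply le_antisymm
  · refine le_sInf fun b hb => ?_
    obtain ⟨u, hu, rfl⟩ := hb
    exact hmono (sInf_le hu)
  · set n := sInf (F '' U) with hn
    obtain ⟨W, hW, hFW⟩ := hsurj (Set.Ici n) (isUpperSet_Ici _)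
    have hdec : W = ⋃ x ∈ W, Set.Ici x := by
      ext y
      simp only [Set.mem_iUnion, Set.mem_Ici]
      exact ⟨fun hy => ⟨y, hy, le_rfl⟩, fun ⟨x, hx, hxy⟩ => hW hxy hx⟩
    have himg : Set.Ici n = ⋃ x ∈ W, Set.Ici (F x) := by
      rw [← hFW, hdec, Set.image_iUnion₂]
      simp only [hIci]
      rw [← hdec]
    have hnmem : n ∈ ⋃ x ∈ W, Set.Ici (F x) := himg ▸ Set.self_mem_Ici
    simp only [Set.mem_iUnion, Set.mem_Ici] at hnmem
    obtain ⟨x, hxW, hFxn⟩ := hnmem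
    have hnFx : n ≤ F x := by
      have : F x ∈ Set.Ici n := himg ▸ (Set.mem_iUnion₂.mpr ⟨x, hxW, Set.self_mem_Ici⟩)
      exact this
    have hFxn' : F x = n := le_antisymm hFxn hnFx
    have hUsub : U ⊆ Set.Ici x := by
      apply hinv U (Set.Ici x) hU (isUpperSet_Ici _)
      rw [hIci x, hFxn']
      rintro v ⟨u, hu, rfl⟩
      exact sInf_le ⟨u, hu, rfl⟩
    have hxinf : x ≤ sInf U := le_sInf fun u hu => hUsub hu
    calc n = F x := hFxn'.symm
      _ ≤ F (sInf U) := hmono hxinf
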